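/- Let q ≥ 3, h = 0 and β > β_c. Then there exists z ∈ ((q−2)/q, 1) such that the set of global minimum points of f_{β,0} on the simplex ℋ is exactly the set of the q distinct coordinate permutations of x_z; in particular f_{β,0} has exactly q global minimum points. -/

import Mathlib

/-!
Write `f_{β,0}(x) = ∑ ψ(x_i)` with `ψ(s) = s log(qs) - βs²/2`. At a minimiser every coordinate
is positive (`ψ` has slope `-∞` at `0`), and moving mass between two coordinates gives
`ψ'(x_i) = ψ'(x_j)` and `ψ''(x_i) + ψ''(x_j) ≥ 0`. Since `ψ''(s) = 1/s - β`, at most one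
coordinate exceeds `1/β`, and `ψ'` is injective on `(0, 1/β]`, so all other coordinates agree:
a minimiser is a permutation of some `x_w`. It is not the uniform point `x_{-z*}`,
`z* = (q-2)/q`, because `β > β_c` makes `x_{z*}` cheaper; so one coordinate does exceed `1/β`,
and `w > -z*`.

Along the path `z ↦ x_z` the energy has derivative `G/2` (`G = pathGap`), and
`G' = 2/(1-z²) - βq/(2(q-1))` increases with `|z|`. So `w` is a zero of `G` with `G'(w) ≥ 0`;
as `G(-z*) = 0` and `G(z*) < 0`, this puts `w` in `(z*, 1)`, where `G` has only one such zero.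
-/
open Finset

noncomputable section

namespace CWP

/-- The probability simplex ℋ in ℝ^q. -/
def simplexH (q : ℕ) : Set (Fin q → ℝ) :=
  {x | (∑ i, x i) = 1 ∧ ∀ i, 0 ≤ x i}

/-- The free-energy functional f_{β,h} of the Curie-Weiss-Potts model. -/
def fFE (q : ℕ) [NeZero q] (β h : ℝ) (x : Fin q → ℝ) : ℝ :=
  (∑ i, x i * Real.log (q * x i)) - β / 2 * (∑ i, x i ^ 2) - h * x 0

/-- The set of global minimum points of f_{β,h} on the simplex ℋ. -/
def minSetF (q : ℕ) [NeZero q] (β h : ℝ) : Set (Fin q → ℝ) :=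
  {x | x ∈ simplexH q ∧ ∀ y ∈ simplexH q, fFE q β h x ≤ fFE q β h y}

/-- h₀ = log(q-1) - 2(q-2)/q. -/
def h0 (q : ℕ) : ℝ := Real.log ((q : ℝ) - 1) - 2 * ((q : ℝ) - 2) / q

/-- The critical line h_T. -/
def onCriticalLine (q : ℕ) (β h : ℝ) : Prop :=
  0 ≤ h ∧ h < h0 q ∧ h = Real.log ((q : ℝ) - 1) - β * ((q : ℝ) - 2) / (2 * ((q : ℝ) - 1))

/-- The parametrized point x_z. -/
def xpar (q : ℕ) [NeZero q] (z : ℝ) : Fin q → ℝ :=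
  fun i => if i = 0 then (1 + z) / 2 else (1 - z) / (2 * ((q : ℝ) - 1))

/-- The critical inverse temperature β_c for q > 2. -/
def betaC (q : ℕ) : ℝ := 2 * ((q : ℝ) - 1) / ((q : ℝ) - 2) * Real.log ((q : ℝ) - 1)

open Filter Topology

theorem _root_.IsLocalMin.nonneg_of_hasDerivAt {f f' : ℝ → ℝ} {x₀ f'' : ℝ}
    (hmin : IsLocalMin f x₀) (hf : ∀ᶠ x in 𝓝 x₀, HasDerivAt f (f' x) x)
    (hf' : HasDerivAt f' f'' x₀) : 0 ≤ f'' := by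
  have hderiv : deriv f =ᶠ[𝓝 x₀] f' := hf.mono fun x hx => hx.deriv
  have hf'' : HasDerivAt (deriv f) f'' x₀ := hf'.congr_of_eventuallyEq hderiv
  by_contra! hneg
  -- then `x₀` is also a local maximum, so `f` is locally constant and `f'' = 0`
  have hmax : IsLocalMax f x₀ :=
    isLocalMax_of_deriv_deriv_neg (by rwa [hf''.deriv]) hmin.deriv_eq_zero
      hf.self_of_nhds.continuousAt
  have hconst : f =ᶠ[𝓝 x₀] fun _ => f x₀ :=
    (hmin.and hmax).mono fun x hx => le_antisymm hx.2 hx.1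
  have hzero : deriv f =ᶠ[𝓝 x₀] fun _ => 0 :=
    hconst.eventuallyEq_nhds.mono fun x hx => by rw [hx.deriv_eq, deriv_const]
  exact hneg.ne ((hf''.congr_of_eventuallyEq hzero.symm).unique (hasDerivAt_const x₀ 0))

lemma ncard_setOf_eq_comp_perm {α : Type*} {n : ℕ} [NeZero n] {a b : α} (hab : a ≠ b) :
    {y | ∃ π : Equiv.Perm (Fin n), y = (fun i => if i = 0 then a else b) ∘ π}.ncard = n := by
  have hrange : {y | ∃ π : Equiv.Perm (Fin n), y = (fun i => if i = 0 then a else b) ∘ π} =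
      Set.range fun i : Fin n => fun j => if j = i then a else b := by
    ext y
    constructor
    · rintro ⟨π, rfl⟩
      exact ⟨π.symm 0, funext fun j => by simp [Equiv.eq_symm_apply]⟩
    · rintro ⟨i, rfl⟩
      exact ⟨Equiv.swap 0 i, funext fun j => by simp [Equiv.swap_apply_eq_iff]⟩
  have hinj : Function.Injective fun i : Fin n => fun j : Fin n => if j = i then a else b :=
    fun i i' h => by_contra fun hne => hab (by simpa [hne] using congrFun h i)
  rw [hrange, Set.ncard_range_of_injective hinj, Nat.card_eq_fintype_card, Fintype.card_fin]

section transfer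

variable {ι : Type*} [Fintype ι] [DecidableEq ι]

def transfer (x : ι → ℝ) (i j : ι) (t : ℝ) : ι → ℝ :=
  fun k => if k = i then x i + t else if k = j then x j - t else x k

lemma sum_comp_transfer (g : ℝ → ℝ) (x : ι → ℝ) {i j : ι} (hij : i ≠ j) (t : ℝ) :
    ∑ k, g (transfer x i j t k) =
      ∑ k, g (x k) + (g (x i + t) - g (x i)) + (g (x j - t) - g (x j)) := by
  have hk : ∀ k, g (transfer x i j t k) = g (x k) + (if k = i then g (x i + t) - g (x i) else 0)
      + (if k = j then g (x j - t) - g (x j) else 0) := by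
    intro k
    unfold transfer
    by_cases hki : k = i
    · simp [hki, hij]
    · by_cases hkj : k = j
      · subst hkj
        simp [hki]
      · simp [hki, hkj]
  simp only [hk, Finset.sum_add_distrib, Finset.sum_ite_eq', Finset.mem_univ, if_true]

end transfer

def psi (q : ℕ) (β s : ℝ) : ℝ := s * Real.log (q * s) - β / 2 * s ^ 2

def psiDeriv (q : ℕ) (β s : ℝ) : ℝ := Real.log (q * s) + 1 - β * s

section psi

variable {q : ℕ} {β : ℝ}

@[simp] lemma psi_zero : psi q β 0 = 0 := by simp [psi]

lemma continuous_psi : Continuous (psi q β) := by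
  have hlog : Continuous fun s : ℝ => s * Real.log (q * s) := by
    rcases eq_or_ne (q : ℝ) 0 with hq | hq
    · simp only [hq, zero_mul, Real.log_zero, mul_zero]
      exact continuous_const
    · refine ((Real.continuous_mul_log.comp (continuous_const_mul (q : ℝ))).const_smul
        (q : ℝ)⁻¹).congr fun s => ?_
      change (q : ℝ)⁻¹ * ((q * s) * Real.log (q * s)) = s * Real.log (q * s)
      field_simp
  exact hlog.sub (by fun_prop)

variable [NeZero q]

lemma hasDerivAt_psi {s : ℝ} (hs : s ≠ 0) : HasDerivAt (psi q β) (psiDeriv q β s) s := by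
  have hq : (q : ℝ) ≠ 0 := NeZero.ne _
  have hlog := ((hasDerivAt_id' s).const_mul (q : ℝ)).log (mul_ne_zero hq hs)
  refine (((hasDerivAt_id' s).mul hlog).sub
    ((hasDerivAt_pow 2 s).const_mul (β / 2))).congr_deriv ?_
  simp only [psiDeriv]
  field_simp
  ring

lemma hasDerivAt_psiDeriv {s : ℝ} (hs : s ≠ 0) : HasDerivAt (psiDeriv q β) (s⁻¹ - β) s := by
  have hq : (q : ℝ) ≠ 0 := NeZero.ne _
  have hlog := ((hasDerivAt_id' s).const_mul (q : ℝ)).log (mul_ne_zero hq hs)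
  refine ((hlog.add_const 1).sub ((hasDerivAt_id' s).const_mul β)).congr_deriv ?_
  field_simp

lemma psiDeriv_strictMonoOn (hβ : 0 < β) : StrictMonoOn (psiDeriv q β) (Set.Ioc 0 β⁻¹) := by
  refine strictMonoOn_of_deriv_pos (convex_Ioc 0 β⁻¹)
    (fun s hs => (hasDerivAt_psiDeriv hs.1.ne').continuousAt.continuousWithinAt) fun s hs => ?_
  rw [interior_Ioc] at hs
  rw [(hasDerivAt_psiDeriv hs.1.ne').deriv, sub_pos]
  exact (lt_inv_comm₀ hs.1 hβ).1 hs.2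

lemma tendsto_psi_div_nhdsGT_zero : Tendsto (fun t => psi q β t / t) (𝓝[>] 0) atBot := by
  have hq : (0 : ℝ) < q := Nat.cast_pos.2 (NeZero.pos q)
  have hmul : Tendsto (fun t : ℝ => q * t) (𝓝[>] 0) (𝓝[>] 0) :=
    tendsto_nhdsWithin_of_tendsto_nhds_of_eventually_within _
      (by simpa using ((continuous_const_mul (q : ℝ)).tendsto 0).mono_left nhdsWithin_le_nhds)
      (eventually_nhdsWithin_of_forall fun t ht => mul_pos hq ht)
  have hlin : Tendsto (fun t : ℝ => -(β / 2) * t) (𝓝[>] 0) (𝓝 0) := by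
    simpa using ((continuous_const_mul (-(β / 2))).tendsto 0).mono_left nhdsWithin_le_nhds
  refine ((Real.tendsto_log_nhdsGT_zero.comp hmul).atBot_add hlin).congr' ?_
  filter_upwards [self_mem_nhdsWithin] with t (ht : 0 < t)
  simp only [psi, Function.comp_apply]
  field_simp
  ring

lemma exists_psi_add_psi_sub_lt {s : ℝ} (hs : 0 < s) :
    ∃ t ∈ Set.Ioo 0 s, psi q β t + psi q β (s - t) < psi q β s := by
  have hslope : Tendsto (fun t => (psi q β (s - t) - psi q β s) / t) (𝓝[>] 0)
      (𝓝 (-psiDeriv q β s)) := by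
    have h := (hasDerivAt_psi (q := q) (β := β) (by simpa using hs.ne')).comp (0 : ℝ)
      ((hasDerivAt_id' 0).const_sub s)
    rw [hasDerivAt_iff_tendsto_slope, sub_zero, mul_neg_one] at h
    refine (h.mono_left (nhdsGT_le_nhdsNE 0)).congr' (Eventually.of_forall fun t => ?_)
    simp [slope_def_field]
  have hsum := (tendsto_psi_div_nhdsGT_zero (q := q) (β := β)).atBot_add hslope
  obtain ⟨t, hneg, ht⟩ := ((hsum.eventually_lt_atBot 0).and (Ioo_mem_nhdsGT hs)).exists
  refine ⟨t, ht, ?_⟩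
  have : (psi q β t + psi q β (s - t) - psi q β s) / t < 0 := by
    rwa [add_sub_assoc, add_div]
  linarith [(div_lt_iff₀ ht.1).1 this]

end psi

section minimizers

variable {q : ℕ} {β : ℝ}

lemma simplexH_eq_stdSimplex : simplexH q = stdSimplex ℝ (Fin q) := by
  ext x
  exact and_comm

lemma transfer_mem_simplexH {x : Fin q → ℝ} (hx : x ∈ simplexH q) {i j : Fin q} (hij : i ≠ j)
    {t : ℝ} (hi : 0 ≤ x i + t) (hj : 0 ≤ x j - t) : transfer x i j t ∈ simplexH q := by
  refine ⟨?_, fun k => ?_⟩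
  · simpa [hx.1] using sum_comp_transfer id x hij t
  · unfold transfer
    split_ifs
    exacts [hi, hj, hx.2 k]

variable [NeZero q]

lemma fFE_zero_eq_sum (x : Fin q → ℝ) : fFE q β 0 x = ∑ i, psi q β (x i) := by
  simp only [fFE, psi, Finset.sum_sub_distrib, Finset.mul_sum]
  ring

lemma fFE_transfer (x : Fin q → ℝ) {i j : Fin q} (hij : i ≠ j) (t : ℝ) :
    fFE q β 0 (transfer x i j t) = fFE q β 0 x + (psi q β (x i + t) - psi q β (x i))
      + (psi q β (x j - t) - psi q β (x j)) := by
  simp only [fFE_zero_eq_sum, sum_comp_transfer _ x hij]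

lemma comp_perm_mem_minSetF_iff {x : Fin q → ℝ} (π : Equiv.Perm (Fin q)) :
    x ∘ π ∈ minSetF q β 0 ↔ x ∈ minSetF q β 0 := by
  have hf : fFE q β 0 (x ∘ π) = fFE q β 0 x := by
    simp only [fFE_zero_eq_sum, Function.comp_apply]
    exact Equiv.sum_comp π fun i => psi q β (x i)
  have hs : x ∘ π ∈ simplexH q ↔ x ∈ simplexH q := by
    simp only [simplexH, Set.mem_ofPred_eq, Function.comp_apply, Equiv.sum_comp π x]
    exact and_congr_right' (π.forall_congr_right (q := fun i => 0 ≤ x i))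
  simp only [minSetF, Set.mem_ofPred_eq, hf, hs]

lemma minSetF_nonempty : (minSetF q β 0).Nonempty := by
  have hcont : Continuous (fFE q β 0) := by
    simp only [funext fFE_zero_eq_sum]
    exact continuous_finsetSum _ fun i _ => continuous_psi.comp (continuous_apply i)
  have hcompact : IsCompact (simplexH q) := by
    rw [simplexH_eq_stdSimplex]
    exact isCompact_stdSimplex ℝ (Fin q)
  have hne : (simplexH q).Nonempty := by
    rw [simplexH_eq_stdSimplex]
    exact ⟨_, single_mem_stdSimplex ℝ (0 : Fin q)⟩
  obtain ⟨x, hx, hmin⟩ := hcompact.exists_isMinOn hne hcont.continuousOn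
  exact ⟨x, hx, fun y hy => hmin hy⟩

variable {x : Fin q → ℝ}

lemma pos_of_mem_minSetF (hx : x ∈ minSetF q β 0) (i : Fin q) : 0 < x i := by
  by_contra! hle
  have hxi : x i = 0 := le_antisymm hle (hx.1.2 i)
  obtain ⟨j, hj⟩ : ∃ j, 0 < x j := by
    by_contra! h
    linarith [hx.1.1, Finset.sum_nonpos fun j (_ : j ∈ Finset.univ) => h j]
  have hij : i ≠ j := by rintro rfl; linarith
  obtain ⟨t, ht, hlt⟩ := exists_psi_add_psi_sub_lt (q := q) (β := β) hj
  have hle := hx.2 _ (transfer_mem_simplexH hx.1 hij (t := t) (by linarith [ht.1])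
    (by linarith [ht.2]))
  rw [fFE_transfer x hij, hxi, zero_add, psi_zero] at hle
  linarith

/-- First- and second-order conditions for moving mass between two coordinates
(`s⁻¹ - β` is `ψ'' s`). -/
lemma psiDeriv_eq_and_inv_sub_nonneg_of_mem_minSetF (hx : x ∈ minSetF q β 0) {i j : Fin q}
    (hij : i ≠ j) :
    psiDeriv q β (x i) = psiDeriv q β (x j) ∧ 0 ≤ (x i)⁻¹ - β + ((x j)⁻¹ - β) := by
  have hi := pos_of_mem_minSetF hx i
  have hj := pos_of_mem_minSetF hx j
  set F : ℝ → ℝ := fun t => psi q β (x i + t) + psi q β (x j - t)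
  have hnhds : Set.Ioo (-x i) (x j) ∈ 𝓝 (0 : ℝ) := Ioo_mem_nhds (by linarith) hj
  have hmin : IsLocalMin F 0 := by
    filter_upwards [hnhds] with t ht
    have := hx.2 _ (transfer_mem_simplexH hx.1 hij (t := t) (by linarith [ht.1])
      (by linarith [ht.2]))
    rw [fFE_transfer x hij] at this
    simp only [F, add_zero, sub_zero]
    linarith
  have hF : ∀ t ∈ Set.Ioo (-x i) (x j),
      HasDerivAt F (psiDeriv q β (x i + t) - psiDeriv q β (x j - t)) t := fun t ht => by
    have h₁ := (hasDerivAt_psi (q := q) (β := β) (by linarith [ht.1] : x i + t ≠ 0)).comp t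
      ((hasDerivAt_id' t).const_add (x i))
    have h₂ := (hasDerivAt_psi (q := q) (β := β) (by linarith [ht.2] : x j - t ≠ 0)).comp t
      ((hasDerivAt_id' t).const_sub (x j))
    exact (h₁.add h₂).congr_deriv (by ring)
  have hF' : HasDerivAt (fun t => psiDeriv q β (x i + t) - psiDeriv q β (x j - t))
      ((x i)⁻¹ - β + ((x j)⁻¹ - β)) 0 := by
    have h₁ := (hasDerivAt_psiDeriv (q := q) (β := β) (by simpa using hi.ne')).comp (0 : ℝ)
      ((hasDerivAt_id' 0).const_add (x i))
    have h₂ := (hasDerivAt_psiDeriv (q := q) (β := β) (by simpa using hj.ne')).comp (0 : ℝ)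
      ((hasDerivAt_id' 0).const_sub (x j))
    exact (h₁.sub h₂).congr_deriv (by simp; ring)
  refine ⟨?_, hmin.nonneg_of_hasDerivAt (eventually_of_mem hnhds hF) hF'⟩
  simpa [sub_eq_zero] using hmin.hasDerivAt_eq_zero (hF 0 (mem_of_mem_nhds hnhds))

lemma psiDeriv_eq_of_mem_minSetF (hx : x ∈ minSetF q β 0) (i j : Fin q) :
    psiDeriv q β (x i) = psiDeriv q β (x j) := by
  rcases eq_or_ne i j with rfl | hij
  · rfl
  · exact (psiDeriv_eq_and_inv_sub_nonneg_of_mem_minSetF hx hij).1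

lemma le_inv_of_mem_minSetF (hβ : 0 < β) (hx : x ∈ minSetF q β 0) {i j : Fin q} (hij : i ≠ j)
    (hi : β⁻¹ < x i) : x j ≤ β⁻¹ := by
  by_contra! hj
  have h := (psiDeriv_eq_and_inv_sub_nonneg_of_mem_minSetF hx hij).2
  linarith [inv_lt_of_inv_lt₀ hβ hi, inv_lt_of_inv_lt₀ hβ hj]

lemma eq_of_mem_minSetF_of_le_inv (hβ : 0 < β) (hx : x ∈ minSetF q β 0) {i j : Fin q}
    (hi : x i ≤ β⁻¹) (hj : x j ≤ β⁻¹) : x i = x j :=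
  (psiDeriv_strictMonoOn hβ).injOn ⟨pos_of_mem_minSetF hx i, hi⟩ ⟨pos_of_mem_minSetF hx j, hj⟩
    (psiDeriv_eq_of_mem_minSetF hx i j)

end minimizers

section path

variable {q : ℕ} {β : ℝ}

lemma cast_sub_one_pos (hq : 2 ≤ q) : (0 : ℝ) < q - 1 := by
  have : (2 : ℝ) ≤ q := by exact_mod_cast hq
  linarith

def xparMajor (z : ℝ) : ℝ := (1 + z) / 2

def xparMinor (q : ℕ) (z : ℝ) : ℝ := (1 - z) / (2 * ((q : ℝ) - 1))

/-- `x_{-zStar q}` is the uniform distribution, and at `β = β_c` the point `x_{zStar q}` has the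
same free energy. -/
def zStar (q : ℕ) : ℝ := ((q : ℝ) - 2) / q

lemma xparMajor_pos {z : ℝ} (hz : -1 < z) : 0 < xparMajor z := by
  unfold xparMajor
  linarith

lemma xparMinor_pos (hq : 2 ≤ q) {z : ℝ} (hz : z < 1) : 0 < xparMinor q z :=
  div_pos (by linarith) (by linarith [cast_sub_one_pos hq])

lemma xparMinor_lt_xparMajor_iff (hq : 2 ≤ q) {z : ℝ} :
    xparMinor q z < xparMajor z ↔ -zStar q < z := by
  have := cast_sub_one_pos hq
  rw [xparMinor, xparMajor, zStar, div_lt_div_iff₀ (by linarith) two_pos, neg_lt,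
    lt_div_iff₀ (by linarith)]
  constructor <;> intro h <;> nlinarith

lemma xparMinor_two_mul_sub_one (hq : 2 ≤ q) {a b : ℝ} (hsum : a + ((q : ℝ) - 1) * b = 1) :
    xparMinor q (2 * a - 1) = b := by
  have := (cast_sub_one_pos hq).ne'
  rw [xparMinor, div_eq_iff (by positivity)]
  linear_combination -2 * hsum

def pathEnergy (q : ℕ) (β z : ℝ) : ℝ :=
  psi q β (xparMajor z) + ((q : ℝ) - 1) * psi q β (xparMinor q z)

def pathGap (q : ℕ) (β z : ℝ) : ℝ :=
  psiDeriv q β (xparMajor z) - psiDeriv q β (xparMinor q z)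

variable [NeZero q]

lemma xpar_apply (z : ℝ) (i : Fin q) :
    xpar q z i = if i = 0 then xparMajor z else xparMinor q z :=
  rfl

lemma sum_ite_eq_add_mul (j : Fin q) (a b : ℝ) :
    ∑ i : Fin q, (if i = j then a else b) = a + ((q : ℝ) - 1) * b := by
  rw [Fintype.sum_eq_add_sum_compl j, if_pos rfl,
    Finset.sum_congr rfl fun i hi => if_neg (Finset.mem_compl.1 hi |>.imp Finset.mem_singleton.2),
    Finset.sum_const, Finset.card_compl, Finset.card_singleton, Fintype.card_fin, nsmul_eq_mul,
    Nat.cast_sub NeZero.one_le, Nat.cast_one]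

lemma sum_eq_add_mul_of_forall_ne {x : Fin q → ℝ} {i₀ : Fin q} {a : ℝ}
    (h : ∀ j ≠ i₀, x j = a) : ∑ j, x j = x i₀ + ((q : ℝ) - 1) * a := by
  rw [← sum_ite_eq_add_mul i₀]
  refine Finset.sum_congr rfl fun j _ => ?_
  split_ifs with hj
  exacts [hj ▸ rfl, h j hj]

lemma xpar_mem_simplexH (hq : 2 ≤ q) {z : ℝ} (hz : z ∈ Set.Icc (-1) 1) :
    xpar q z ∈ simplexH q := by
  have := (cast_sub_one_pos hq).ne'
  refine ⟨?_, fun i => ?_⟩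
  · simp only [xpar_apply, sum_ite_eq_add_mul, xparMajor, xparMinor]
    field_simp
    ring
  · rw [xpar_apply]
    split_ifs
    · exact div_nonneg (by linarith [hz.1]) zero_le_two
    · exact div_nonneg (by linarith [hz.2]) (by linarith [cast_sub_one_pos hq])

lemma eq_xpar_comp_swap (hq : 2 ≤ q) {x : Fin q → ℝ} {i₀ : Fin q} {a : ℝ}
    (hsum : x i₀ + ((q : ℝ) - 1) * a = 1) (h : ∀ j ≠ i₀, x j = a) :
    x = xpar q (2 * x i₀ - 1) ∘ Equiv.swap 0 i₀ := by
  funext k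
  rw [Function.comp_apply, xpar_apply]
  by_cases hk : k = i₀
  · subst hk
    rw [Equiv.swap_apply_right, if_pos rfl, xparMajor]
    ring
  · rw [if_neg fun h0 => hk (by simpa using Equiv.swap_apply_eq_iff.1 h0), h k hk,
      xparMinor_two_mul_sub_one hq hsum]

lemma fFE_xpar (z : ℝ) : fFE q β 0 (xpar q z) = pathEnergy q β z := by
  rw [fFE_zero_eq_sum, pathEnergy, ← sum_ite_eq_add_mul 0]
  exact Finset.sum_congr rfl fun i _ => apply_ite (psi q β) _ _ _

section derivatives

variable (hq : 2 ≤ q) {z : ℝ} (hz : z ∈ Set.Ioo (-1) 1)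
include hq hz

lemma hasDerivAt_pathEnergy : HasDerivAt (pathEnergy q β) (pathGap q β z / 2) z := by
  have := cast_sub_one_pos hq
  have h₁ := (hasDerivAt_psi (q := q) (β := β) (xparMajor_pos hz.1).ne').comp z
    (((hasDerivAt_id' z).const_add 1).div_const 2)
  have h₂ := (hasDerivAt_psi (q := q) (β := β) (xparMinor_pos hq hz.2).ne').comp z
    (((hasDerivAt_id' z).const_sub 1).div_const (2 * ((q : ℝ) - 1)))
  refine (h₁.add (h₂.const_mul ((q : ℝ) - 1))).congr_deriv ?_
  simp only [pathGap]
  field_simp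
  ring

lemma hasDerivAt_pathGap :
    HasDerivAt (pathGap q β) (2 / (1 - z ^ 2) - β * q / (2 * ((q : ℝ) - 1))) z := by
  have := cast_sub_one_pos hq
  have h₁ := (hasDerivAt_psiDeriv (q := q) (β := β) (xparMajor_pos hz.1).ne').comp z
    (((hasDerivAt_id' z).const_add 1).div_const 2)
  have h₂ := (hasDerivAt_psiDeriv (q := q) (β := β) (xparMinor_pos hq hz.2).ne').comp z
    (((hasDerivAt_id' z).const_sub 1).div_const (2 * ((q : ℝ) - 1)))
  refine (h₁.sub h₂).congr_deriv ?_
  have h1 : 1 + z ≠ 0 := by linarith [hz.1]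
  have h2 : 1 - z ≠ 0 := by linarith [hz.2]
  have h3 : 1 - z ^ 2 ≠ 0 := by nlinarith [hz.1, hz.2]
  simp only [xparMajor, xparMinor]
  field_simp
  ring

lemma pathGap_eq_zero_and_le_of_xpar_mem_minSetF (hmin : xpar q z ∈ minSetF q β 0) :
    pathGap q β z = 0 ∧ β * q / (2 * ((q : ℝ) - 1)) ≤ 2 / (1 - z ^ 2) := by
  have hIoo : Set.Ioo (-1 : ℝ) 1 ∈ 𝓝 z := Ioo_mem_nhds hz.1 hz.2
  have hlocal : IsLocalMin (pathEnergy q β) z := by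
    filter_upwards [hIoo] with y hy
    rw [← fFE_xpar, ← fFE_xpar]
    exact hmin.2 _ (xpar_mem_simplexH hq ⟨hy.1.le, hy.2.le⟩)
  refine ⟨by linarith [hlocal.hasDerivAt_eq_zero (hasDerivAt_pathEnergy hq hz)], ?_⟩
  have := hlocal.nonneg_of_hasDerivAt
    (eventually_of_mem hIoo fun y hy => hasDerivAt_pathEnergy (β := β) hq hy)
    ((hasDerivAt_pathGap hq hz).div_const 2)
  linarith

end derivatives

lemma pathGap_lt_of_sq_lt (hq : 2 ≤ q) {u v p : ℝ} (hu : -1 < u) (huv : u < v) (hv : v < 1)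
    (hp : β * q / (2 * ((q : ℝ) - 1)) ≤ 2 / (1 - p ^ 2))
    (hpy : ∀ y ∈ Set.Ioo u v, p ^ 2 < y ^ 2) : pathGap q β u < pathGap q β v := by
  have hIoo : ∀ y ∈ Set.Icc u v, y ∈ Set.Ioo (-1 : ℝ) 1 := fun y hy =>
    ⟨hu.trans_le hy.1, hy.2.trans_lt hv⟩
  refine strictMonoOn_of_deriv_pos (convex_Icc u v)
    (fun y hy => (hasDerivAt_pathGap hq (hIoo y hy)).continuousAt.continuousWithinAt)
    (fun y hy => ?_) (Set.left_mem_Icc.2 huv.le) (Set.right_mem_Icc.2 huv.le) huv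
  rw [interior_Icc] at hy
  have hy1 := hIoo y (Set.Ioo_subset_Icc_self hy)
  have hpy' := hpy y hy
  rw [(hasDerivAt_pathGap hq hy1).deriv, sub_pos]
  refine hp.trans_lt (div_lt_div_of_pos_left two_pos ?_ (by linarith))
  nlinarith [hy1.1, hy1.2]

lemma eq_of_pathGap_eq_zero (hq : 2 ≤ q) {w₁ w₂ : ℝ} (h₁ : 0 ≤ w₁) (h₂ : 0 ≤ w₂)
    (h₁' : w₁ < 1) (h₂' : w₂ < 1) (hG₁ : pathGap q β w₁ = 0) (hG₂ : pathGap q β w₂ = 0)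
    (hS₁ : β * q / (2 * ((q : ℝ) - 1)) ≤ 2 / (1 - w₁ ^ 2))
    (hS₂ : β * q / (2 * ((q : ℝ) - 1)) ≤ 2 / (1 - w₂ ^ 2)) : w₁ = w₂ := by
  rcases lt_trichotomy w₁ w₂ with h | h | h
  · have := pathGap_lt_of_sq_lt hq (by linarith) h h₂' hS₁ fun y hy => by nlinarith [hy.1]
    linarith
  · exact h
  · have := pathGap_lt_of_sq_lt hq (by linarith) h h₁' hS₂ fun y hy => by nlinarith [hy.1]
    linarith

end path

section critical

variable {q : ℕ} {β : ℝ}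

lemma betaC_pos (hq : 3 ≤ q) : 0 < betaC q := by
  have hq3 : (3 : ℝ) ≤ q := by exact_mod_cast hq
  unfold betaC
  exact mul_pos (div_pos (by linarith) (by linarith)) (Real.log_pos (by linarith))

variable [NeZero q]

lemma zStar_pos (hq : 3 ≤ q) : 0 < zStar q :=
  div_pos (by linarith [(show (3 : ℝ) ≤ q by exact_mod_cast hq)]) (Nat.cast_pos.2 (NeZero.pos q))

lemma zStar_lt_one : zStar q < 1 := by
  rw [zStar, div_lt_one (Nat.cast_pos.2 (NeZero.pos q))]
  linarith

lemma xparMajor_neg_zStar : xparMajor (-zStar q) = (q : ℝ)⁻¹ := by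
  have : (q : ℝ) ≠ 0 := NeZero.ne _
  simp only [xparMajor, zStar]
  field_simp
  ring

lemma xparMinor_neg_zStar (hq : 2 ≤ q) : xparMinor q (-zStar q) = (q : ℝ)⁻¹ := by
  have : (q : ℝ) ≠ 0 := NeZero.ne _
  have := (cast_sub_one_pos hq).ne'
  simp only [xparMinor, zStar]
  field_simp
  ring

lemma mul_xparMajor_zStar : (q : ℝ) * xparMajor (zStar q) = (q : ℝ) - 1 := by
  have : (q : ℝ) ≠ 0 := NeZero.ne _
  simp only [xparMajor, zStar]
  field_simp
  ring

lemma mul_xparMinor_zStar (hq : 2 ≤ q) : (q : ℝ) * xparMinor q (zStar q) = ((q : ℝ) - 1)⁻¹ := by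
  have : (q : ℝ) ≠ 0 := NeZero.ne _
  have := (cast_sub_one_pos hq).ne'
  simp only [xparMinor, zStar]
  field_simp
  ring

lemma pathGap_neg_zStar (hq : 2 ≤ q) : pathGap q β (-zStar q) = 0 := by
  rw [pathGap, xparMajor_neg_zStar, xparMinor_neg_zStar hq, sub_self]

lemma pathGap_zStar (hq : 2 ≤ q) :
    pathGap q β (zStar q) = 2 * Real.log ((q : ℝ) - 1) - β * ((q : ℝ) - 2) / ((q : ℝ) - 1) := by
  have : (q : ℝ) ≠ 0 := NeZero.ne _
  have := (cast_sub_one_pos hq).ne'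
  simp only [pathGap, psiDeriv, mul_xparMajor_zStar, mul_xparMinor_zStar hq, Real.log_inv]
  simp only [xparMajor, xparMinor, zStar]
  field_simp
  ring

lemma pathEnergy_zStar_sub (hq : 2 ≤ q) : pathEnergy q β (zStar q) - pathEnergy q β (-zStar q) =
    zStar q / 2 * pathGap q β (zStar q) := by
  have hq0 : (q : ℝ) ≠ 0 := NeZero.ne _
  have := (cast_sub_one_pos hq).ne'
  rw [pathGap_zStar hq]
  simp only [pathEnergy, psi, mul_xparMajor_zStar, mul_xparMinor_zStar hq, xparMajor_neg_zStar,
    xparMinor_neg_zStar hq, mul_inv_cancel₀ hq0, Real.log_one, Real.log_inv]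
  simp only [xparMajor, xparMinor, zStar]
  field_simp
  ring

variable (hq : 3 ≤ q) (hβ : betaC q < β)
include hq hβ

lemma pathGap_zStar_neg : pathGap q β (zStar q) < 0 := by
  have hq3 : (3 : ℝ) ≤ q := by exact_mod_cast hq
  rw [pathGap_zStar (by omega), sub_neg, lt_div_iff₀ (by linarith)]
  calc 2 * Real.log ((q : ℝ) - 1) * ((q : ℝ) - 1) = betaC q * ((q : ℝ) - 2) := by
        unfold betaC
        field_simp [show (q : ℝ) - 2 ≠ 0 by linarith]
    _ < β * ((q : ℝ) - 2) := mul_lt_mul_of_pos_right hβ (by linarith)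

lemma pathEnergy_zStar_lt : pathEnergy q β (zStar q) < pathEnergy q β (-zStar q) := by
  have := pathEnergy_zStar_sub (β := β) (by omega : 2 ≤ q)
  nlinarith [zStar_pos hq, pathGap_zStar_neg hq hβ]

end critical

section shape

variable {q : ℕ} [NeZero q] {β : ℝ} (hq : 3 ≤ q) (hβ : betaC q < β)
include hq hβ

lemma exists_inv_lt_of_mem_minSetF {x : Fin q → ℝ} (hx : x ∈ minSetF q β 0) :
    ∃ i, β⁻¹ < x i := by
  by_contra! hsmall
  have hconst : ∀ j, x j = x 0 := fun j =>
    eq_of_mem_minSetF_of_le_inv ((betaC_pos hq).trans hβ) hx (hsmall j) (hsmall 0)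
  have hx0 : (q : ℝ) * x 0 = 1 := by
    rw [← hx.1.1, sum_eq_add_mul_of_forall_ne fun j _ => hconst j]
    ring
  have huniform : x = xpar q (-zStar q) := funext fun k => by
    rw [xpar_apply, xparMajor_neg_zStar, xparMinor_neg_zStar (by omega), ite_self, hconst k,
      eq_inv_of_mul_eq_one_right hx0]
  have hle := hx.2 _ (xpar_mem_simplexH (z := zStar q) (by omega)
    ⟨by linarith [zStar_pos hq], zStar_lt_one.le⟩)
  rw [huniform, fFE_xpar, fFE_xpar] at hle
  exact (pathEnergy_zStar_lt hq hβ).not_ge hle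

lemma exists_eq_xpar_comp_of_mem_minSetF {x : Fin q → ℝ} (hx : x ∈ minSetF q β 0) :
    ∃ w, -zStar q < w ∧ w < 1 ∧ ∃ π : Equiv.Perm (Fin q), x = xpar q w ∘ π := by
  have hβ0 : 0 < β := (betaC_pos hq).trans hβ
  obtain ⟨i₀, hi₀⟩ := exists_inv_lt_of_mem_minSetF hq hβ hx
  have : Nontrivial (Fin q) := Fin.nontrivial_iff_two_le.2 (by omega)
  obtain ⟨j₀, hj₀⟩ := exists_ne i₀
  have hsmall : ∀ j ≠ i₀, x j ≤ β⁻¹ := fun j hj =>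
    le_inv_of_mem_minSetF hβ0 hx (Ne.symm hj) hi₀
  have hconst : ∀ j ≠ i₀, x j = x j₀ := fun j hj =>
    eq_of_mem_minSetF_of_le_inv hβ0 hx (hsmall j hj) (hsmall j₀ hj₀)
  have hsum : x i₀ + ((q : ℝ) - 1) * x j₀ = 1 :=
    (sum_eq_add_mul_of_forall_ne hconst).symm.trans hx.1.1
  refine ⟨2 * x i₀ - 1, ?_, ?_, _, eq_xpar_comp_swap (by omega) hsum hconst⟩
  · rw [← xparMinor_lt_xparMajor_iff (by omega), xparMinor_two_mul_sub_one (by omega) hsum,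
      xparMajor]
    linarith [hsmall j₀ hj₀]
  · nlinarith [pos_of_mem_minSetF hx j₀, cast_sub_one_pos (q := q) (by omega)]

lemma zStar_lt_of_xpar_mem_minSetF {w : ℝ} (hmin : xpar q w ∈ minSetF q β 0)
    (hw : -zStar q < w) (hw' : w < 1) : zStar q < w := by
  have hz := zStar_pos hq
  have hz' := zStar_lt_one (q := q)
  obtain ⟨hG, hS⟩ :=
    pathGap_eq_zero_and_le_of_xpar_mem_minSetF (by omega) ⟨by linarith, hw'⟩ hmin
  by_contra! hle
  rcases lt_or_ge w 0 with hneg | hnonneg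
  · have := pathGap_lt_of_sq_lt (by omega) (by linarith) hw hw' hS fun y hy => by nlinarith [hy.2]
    rw [pathGap_neg_zStar (by omega), hG] at this
    exact this.false
  · have hlt : w < zStar q := hle.lt_of_ne fun h => by
      linarith [pathGap_zStar_neg hq hβ, h ▸ hG]
    have := pathGap_lt_of_sq_lt (by omega) (by linarith) hlt hz' hS fun y hy => by nlinarith [hy.1]
    linarith [pathGap_zStar_neg hq hβ]

lemma eq_of_xpar_mem_minSetF {w₁ w₂ : ℝ} (h₁ : xpar q w₁ ∈ minSetF q β 0)
    (h₂ : xpar q w₂ ∈ minSetF q β 0) (hw₁ : -zStar q < w₁) (hw₁' : w₁ < 1)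
    (hw₂ : -zStar q < w₂) (hw₂' : w₂ < 1) : w₁ = w₂ := by
  have hz := zStar_pos hq
  have hl₁ := zStar_lt_of_xpar_mem_minSetF hq hβ h₁ hw₁ hw₁'
  have hl₂ := zStar_lt_of_xpar_mem_minSetF hq hβ h₂ hw₂ hw₂'
  obtain ⟨hG₁, hS₁⟩ :=
    pathGap_eq_zero_and_le_of_xpar_mem_minSetF (by omega) ⟨by linarith, hw₁'⟩ h₁
  obtain ⟨hG₂, hS₂⟩ :=
    pathGap_eq_zero_and_le_of_xpar_mem_minSetF (by omega) ⟨by linarith, hw₂'⟩ h₂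
  exact eq_of_pathGap_eq_zero (by omega) (by linarith) (by linarith) hw₁' hw₂' hG₁ hG₂ hS₁ hS₂

end shape

/-- For h = 0 and β > β_c there is z ∈ ((q-2)/q,1) such that the set of global
minimum points of f_{β,0} on ℋ is exactly the set of the q coordinate
permutations of x_z; in particular there are exactly q global minimum points. -/
theorem stmt_3 (q : ℕ) [NeZero q] (hq : 3 ≤ q) (β : ℝ) (hβ : betaC q < β) :
    ∃ z : ℝ, ((q : ℝ) - 2) / q < z ∧ z < 1 ∧
      minSetF q β 0 = {y | ∃ π : Equiv.Perm (Fin q), y = xpar q z ∘ π} ∧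
      (minSetF q β 0).ncard = q := by
  obtain ⟨x, hx⟩ := minSetF_nonempty (q := q) (β := β)
  obtain ⟨w, hw, hw', π, rfl⟩ := exists_eq_xpar_comp_of_mem_minSetF hq hβ hx
  have hmin : xpar q w ∈ minSetF q β 0 := (comp_perm_mem_minSetF_iff π).1 hx
  have hset : minSetF q β 0 = {y | ∃ π : Equiv.Perm (Fin q), y = xpar q w ∘ π} := by
    ext y
    refine ⟨fun hy => ?_, fun ⟨σ, hσ⟩ => hσ ▸ (comp_perm_mem_minSetF_iff σ).2 hmin⟩
    obtain ⟨w', hw₁, hw₁', σ, rfl⟩ := exists_eq_xpar_comp_of_mem_minSetF hq hβ hy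
    have hww := eq_of_xpar_mem_minSetF hq hβ ((comp_perm_mem_minSetF_iff σ).1 hy) hmin
      hw₁ hw₁' hw hw'
    exact ⟨σ, hww ▸ rfl⟩
  refine ⟨w, zStar_lt_of_xpar_mem_minSetF hq hβ hmin hw hw', hw', hset, ?_⟩
  rw [hset]
  exact ncard_setOf_eq_comp_perm ((xparMinor_lt_xparMajor_iff (by omega)).2 hw).ne'

end CWP
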